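/- arXiv:2312.03121 — 4 statements merged into one kernel-verified Lean document; each statement's English description precedes it below -/
import Mathlib

section
/- Let S be an m×n real matrix. Consider the 'double game' in which player 1 chooses (x₁ᴬ, x₁ᴮ) ∈ Δ_m × Δ_n, player 2 chooses (x₂ᴬ, x₂ᴮ) ∈ Δ_m × Δ_n, and the payoff (which player 1 minimizes and player 2 maximizes) is F = (x₁ᴬ)ᵀ S x₂ᴮ − (x₁ᴮ)ᵀ Sᵀ x₂ᴬ. Then the value of this game is zero: min over (x₁ᴬ, x₁ᴮ) of max over (x₂ᴬ, x₂ᴮ) of F equals 0. -/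
/-!
The payoff of the double game is an alternating bilinear form `B` on `Δ_m × Δ_n`, because
`(xᴬ)ᵀ S xᴮ = (xᴮ)ᵀ Sᵀ xᴬ`. By the Sion–von Neumann minimax theorem `B` has a saddle point
`(a, b)`, so `B a y ≤ B b b = 0` for every `y`; conversely every strategy `x` of player 1 is
answered by `x` itself, with payoff `B x x = 0`.
-/

open Matrix

/-- The bilinear payoff `xᵀ A y = ∑_{i,j} x_i A_{ij} y_j`. -/
noncomputable def pay {m n : ℕ} (A : Matrix (Fin m) (Fin n) ℝ)
    (x : Fin m → ℝ) (y : Fin n → ℝ) : ℝ :=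
  ∑ i, ∑ j, x i * A i j * y j

theorem isLeast_image_sSup_image_of_forall_nonpos {α : Type*} {X : Set α} {f : α → α → ℝ}
    (hdiag : ∀ x ∈ X, f x x = 0) (hbdd : ∀ x ∈ X, BddAbove (f x '' X)) {a : α} (ha : a ∈ X)
    (hfa : ∀ y ∈ X, f a y ≤ 0) :
    IsLeast ((fun x => sSup (f x '' X)) '' X) 0 := by
  have hnonneg : ∀ x ∈ X, 0 ≤ sSup (f x '' X) := fun x hx =>
    le_csSup (hbdd x hx) ⟨x, hx, hdiag x hx⟩
  refine ⟨⟨a, ha, ?_⟩, ?_⟩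
  · exact le_antisymm (csSup_le ⟨_, a, ha, rfl⟩ (by rintro _ ⟨y, hy, rfl⟩; exact hfa y hy))
      (hnonneg a ha)
  · rintro _ ⟨x, hx, rfl⟩
    exact hnonneg x hx

namespace LinearMap.IsAlt

variable {E : Type*} [AddCommGroup E] [Module ℝ E] [TopologicalSpace E] [IsTopologicalAddGroup E]
  [ContinuousSMul ℝ E] [T2Space E] [FiniteDimensional ℝ E] {B : E →ₗ[ℝ] E →ₗ[ℝ] ℝ} {X : Set E}

theorem exists_forall_apply_nonpos (hB : B.IsAlt) (hne : X.Nonempty) (hc : Convex ℝ X)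
    (hk : IsCompact X) : ∃ a ∈ X, ∀ y ∈ X, B a y ≤ 0 := by
  have hlsc (y : E) : LowerSemicontinuousOn (fun x => B x y) X :=
    (B.flip y).continuous_of_finiteDimensional.lowerSemicontinuous.lowerSemicontinuousOn X
  have husc (x : E) : UpperSemicontinuousOn (fun y => B x y) X :=
    (B x).continuous_of_finiteDimensional.upperSemicontinuous.upperSemicontinuousOn X
  obtain ⟨a, ha, b, hb, hab⟩ := Sion.exists_isSaddlePointOn hne hc hk (fun y _ => hlsc y)
    (fun y _ => ((B.flip y).convexOn hc).quasiconvexOn) hc hne hk (fun x _ => husc x)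
    (fun x _ => ((B x).concaveOn hc).quasiconcaveOn)
  exact ⟨a, ha, fun y hy => (hab b hb y hy).trans_eq (hB b)⟩

theorem sInf_image_sSup_image_eq_zero (hB : B.IsAlt) (hc : Convex ℝ X) (hk : IsCompact X) :
    sInf ((fun x => sSup ((fun y => B x y) '' X)) '' X) = 0 := by
  obtain rfl | hne := X.eq_empty_or_nonempty
  · simp -- junk value: `sInf ∅ = 0` in `ℝ`
  obtain ⟨a, ha, hfa⟩ := hB.exists_forall_apply_nonpos hne hc hk
  exact (isLeast_image_sSup_image_of_forall_nonpos (fun x _ => hB x)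
    (fun x _ => (hk.image (B x).continuous_of_finiteDimensional).bddAbove) ha hfa).csInf_eq

end LinearMap.IsAlt

section DoubleGame

variable {m n : ℕ}

theorem pay_eq_toLinearMap₂' (A : Matrix (Fin m) (Fin n) ℝ) (x : Fin m → ℝ) (y : Fin n → ℝ) :
    pay A x y = toLinearMap₂' ℝ A x y := by
  simp only [pay, toLinearMap₂'_apply, smul_eq_mul]
  exact Finset.sum_congr rfl fun i _ => Finset.sum_congr rfl fun j _ => by ring

theorem pay_transpose (A : Matrix (Fin m) (Fin n) ℝ) (x : Fin m → ℝ) (y : Fin n → ℝ) :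
    pay Aᵀ y x = pay A x y := by
  rw [pay, Finset.sum_comm]
  exact Finset.sum_congr rfl fun i _ => Finset.sum_congr rfl fun j _ => by
    rw [transpose_apply]; ring

noncomputable def doublePay (S : Matrix (Fin m) (Fin n) ℝ) :
    (Fin m → ℝ) × (Fin n → ℝ) →ₗ[ℝ] (Fin m → ℝ) × (Fin n → ℝ) →ₗ[ℝ] ℝ :=
  (toLinearMap₂' ℝ S).compl₁₂ (LinearMap.fst ℝ _ _) (LinearMap.snd ℝ _ _) -
    (toLinearMap₂' ℝ Sᵀ).compl₁₂ (LinearMap.snd ℝ _ _) (LinearMap.fst ℝ _ _)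

theorem doublePay_apply (S : Matrix (Fin m) (Fin n) ℝ) (p q : (Fin m → ℝ) × (Fin n → ℝ)) :
    doublePay S p q = pay S p.1 q.2 - pay Sᵀ p.2 q.1 := by
  simp [doublePay, pay_eq_toLinearMap₂']

theorem doublePay_isAlt (S : Matrix (Fin m) (Fin n) ℝ) : (doublePay S).IsAlt := fun p => by
  rw [doublePay_apply, pay_transpose, sub_self]

end DoubleGame

/-- The value of the 'double game' with payoff
`F = (x₁ᴬ)ᵀ S x₂ᴮ − (x₁ᴮ)ᵀ Sᵀ x₂ᴬ` (player 1 minimizing over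
`(x₁ᴬ, x₁ᴮ) ∈ Δ_m × Δ_n`, player 2 maximizing over `(x₂ᴬ, x₂ᴮ) ∈ Δ_m × Δ_n`)
is zero. -/
theorem double_game_value_zero {m n : ℕ} (S : Matrix (Fin m) (Fin n) ℝ) :
    sInf ((fun x₁ : (Fin m → ℝ) × (Fin n → ℝ) =>
        sSup ((fun x₂ : (Fin m → ℝ) × (Fin n → ℝ) =>
            pay S x₁.1 x₂.2 - pay Sᵀ x₁.2 x₂.1) ''
          (stdSimplex ℝ (Fin m) ×ˢ stdSimplex ℝ (Fin n)))) ''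
      (stdSimplex ℝ (Fin m) ×ˢ stdSimplex ℝ (Fin n))) = 0 := by
  have hc := (convex_stdSimplex ℝ (Fin m)).prod (convex_stdSimplex ℝ (Fin n))
  have hk := (isCompact_stdSimplex ℝ (Fin m)).prod (isCompact_stdSimplex ℝ (Fin n))
  simpa only [doublePay_apply] using (doublePay_isAlt S).sInf_image_sSup_image_eq_zero hc hk
end

section
/- (Nash Average AvT Equivalence) Let S be an m×n real matrix. A profile (x₁ᴬ, x₁ᴮ, x₂ᴬ, x₂ᴮ) ∈ Δ_m × Δ_n × Δ_m × Δ_n is a saddle point of the double game with payoff F = (x₁ᴬ)ᵀ S x₂ᴮ − (x₁ᴮ)ᵀ Sᵀ x₂ᴬ (player 1 minimizing over (x₁ᴬ, x₁ᴮ), player 2 maximizing over (x₂ᴬ, x₂ᴮ)) if and only if both (x₁ᴬ, x₂ᴮ) and (x₂ᴬ, x₁ᴮ) are saddle points of the single game with payoff f(x, y) = xᵀ S y (x ∈ Δ_m minimizing, y ∈ Δ_n maximizing). -/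
open Matrix

/-- `(x, y)` is a saddle point of the single game `f(x, y) = xᵀ S y`
(`x ∈ Δ_m` minimizing, `y ∈ Δ_n` maximizing). -/
def SaddleSingle {m n : ℕ} (S : Matrix (Fin m) (Fin n) ℝ)
    (x : Fin m → ℝ) (y : Fin n → ℝ) : Prop :=
  x ∈ stdSimplex ℝ (Fin m) ∧ y ∈ stdSimplex ℝ (Fin n) ∧
    (∀ x' ∈ stdSimplex ℝ (Fin m), pay S x y ≤ pay S x' y) ∧
    (∀ y' ∈ stdSimplex ℝ (Fin n), pay S x y' ≤ pay S x y)

/-- The payoff of the double game: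
`F = (x₁ᴬ)ᵀ S x₂ᴮ − (x₁ᴮ)ᵀ Sᵀ x₂ᴬ`. -/
noncomputable def doublePayoff {m n : ℕ} (S : Matrix (Fin m) (Fin n) ℝ)
    (x₁A : Fin m → ℝ) (x₁B : Fin n → ℝ) (x₂A : Fin m → ℝ) (x₂B : Fin n → ℝ) : ℝ :=
  pay S x₁A x₂B - pay Sᵀ x₁B x₂A

/-- `(x₁ᴬ, x₁ᴮ, x₂ᴬ, x₂ᴮ)` is a saddle point of the double game
(player 1 minimizing over `(x₁ᴬ, x₁ᴮ)`, player 2 maximizing over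
`(x₂ᴬ, x₂ᴮ)`). -/
def SaddleDouble {m n : ℕ} (S : Matrix (Fin m) (Fin n) ℝ)
    (x₁A : Fin m → ℝ) (x₁B : Fin n → ℝ) (x₂A : Fin m → ℝ) (x₂B : Fin n → ℝ) : Prop :=
  x₁A ∈ stdSimplex ℝ (Fin m) ∧ x₁B ∈ stdSimplex ℝ (Fin n) ∧
  x₂A ∈ stdSimplex ℝ (Fin m) ∧ x₂B ∈ stdSimplex ℝ (Fin n) ∧
    (∀ x₁A' ∈ stdSimplex ℝ (Fin m), ∀ x₁B' ∈ stdSimplex ℝ (Fin n),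
      doublePayoff S x₁A x₁B x₂A x₂B ≤ doublePayoff S x₁A' x₁B' x₂A x₂B) ∧
    (∀ x₂A' ∈ stdSimplex ℝ (Fin m), ∀ x₂B' ∈ stdSimplex ℝ (Fin n),
      doublePayoff S x₁A x₁B x₂A' x₂B' ≤ doublePayoff S x₁A x₁B x₂A x₂B)

/-- (Nash Average AvT Equivalence) A profile is a saddle point of the double
game if and only if both `(x₁ᴬ, x₂ᴮ)` and `(x₂ᴬ, x₁ᴮ)` are saddle points of
the single game `f(x, y) = xᵀ S y`. -/
theorem nash_average_avt_equivalence {m n : ℕ} (S : Matrix (Fin m) (Fin n) ℝ)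
    (x₁A x₂A : Fin m → ℝ) (x₁B x₂B : Fin n → ℝ) :
    SaddleDouble S x₁A x₁B x₂A x₂B ↔
      SaddleSingle S x₁A x₂B ∧ SaddleSingle S x₂A x₁B := by
  have key : ∀ (x : Fin m → ℝ) (y : Fin n → ℝ), pay Sᵀ y x = pay S x y := by
    intro x y
    unfold pay
    rw [Finset.sum_comm]
    exact Finset.sum_congr rfl fun i _ => Finset.sum_congr rfl fun j _ => by
      simp [Matrix.transpose_apply]; ring
  constructor
  · rintro ⟨h1, h2, h3, h4, h5, h6⟩
    refine ⟨⟨h1, h4, ?_, ?_⟩, ⟨h3, h2, ?_, ?_⟩⟩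
    · intro x' hx'
      have := h5 x' hx' x₁B h2
      simp only [doublePayoff, key] at this
      linarith
    · intro y' hy'
      have := h6 x₂A h3 y' hy'
      simp only [doublePayoff, key] at this
      linarith
    · intro x' hx'
      have := h6 x' hx' x₂B h4
      simp only [doublePayoff, key] at this
      linarith
    · intro y' hy'
      have := h5 x₁A h1 y' hy'
      simp only [doublePayoff, key] at this
      linarith
  · rintro ⟨⟨h1, h4, hmin1, hmax1⟩, ⟨h3, h2, hmin2, hmax2⟩⟩
    refine ⟨h1, h2, h3, h4, ?_, ?_⟩
    · intro x' hx' y' hy'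
      have a := hmin1 x' hx'
      have b := hmax2 y' hy'
      simp only [doublePayoff, key]
      linarith
    · intro x' hx' y' hy'
      have a := hmin2 x' hx'
      have b := hmax1 y' hy'
      simp only [doublePayoff, key]
      linarith
end

section
/- Let M be an n×n real antisymmetric matrix (Mᵀ = −M) and suppose the alternative a* is a strong Condorcet winner, i.e., M_{a*, y} > 0 for every y ≠ a*. Then p ∈ Δ_n is a maximal lottery for M (pᵀ M q ≥ 0 for all q ∈ Δ_n) if and only if p is the point mass on a* (p_{a*} = 1 and p_y = 0 for y ≠ a*); in particular, the maximal lottery is unique and selects the strong Condorcet winner with probability 1. -/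
open Matrix

/-- If `a*` is a strong Condorcet winner for an antisymmetric margin matrix `M`
(`M_{a*, y} > 0` for all `y ≠ a*`), then `p ∈ Δ_n` is a maximal lottery for `M`
iff `p` is the point mass on `a*`; in particular the maximal lottery is unique
and selects the strong Condorcet winner with probability 1. -/
theorem maximal_lottery_strong_condorcet {n : ℕ}
    (M : Matrix (Fin n) (Fin n) ℝ) (hM : Mᵀ = -M) (a : Fin n)
    (ha : ∀ y : Fin n, y ≠ a → 0 < M a y) :
    ∀ p ∈ stdSimplex ℝ (Fin n),
      ((∀ q ∈ stdSimplex ℝ (Fin n), 0 ≤ pay M p q) ↔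
        p = fun y => if y = a then (1 : ℝ) else 0) := by
  have hanti : ∀ i j, M i j = - M j i := by
    intro i j
    have := congrFun (congrFun hM j) i
    simpa [Matrix.transpose_apply] using this
  have haa : M a a = 0 := by
    have := hanti a a; linarith
  have hdelta : (fun y => if y = a then (1 : ℝ) else 0) ∈ stdSimplex ℝ (Fin n) := by
    constructor
    · intro x; by_cases h : x = a <;> simp [h]
    · simp
  intro p hp
  constructor
  · intro hmax
    have h0 := hmax _ hdelta
    have hpay : pay M p (fun y => if y = a then (1 : ℝ) else 0)
        = ∑ i, p i * M i a := by
      unfold pay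
      refine Finset.sum_congr rfl fun i _ => ?_
      rw [Finset.sum_eq_single a]
      · simp
      · intro b _ hb; simp [hb]
      · simp
    rw [hpay] at h0
    -- each term p i * M i a ≤ 0
    have hterm : ∀ i, 0 ≤ -(p i * M i a) := by
      intro i
      by_cases h : i = a
      · simp [h, haa]
      · have : M i a < 0 := by rw [hanti i a]; linarith [ha i h]
        nlinarith [hp.1 i]
    have hsum0 : ∑ i, -(p i * M i a) = 0 := by
      have h1 : ∑ i, -(p i * M i a) ≤ 0 := by
        rw [Finset.sum_neg_distrib]; linarith
      have h2 : 0 ≤ ∑ i, -(p i * M i a) :=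
        Finset.sum_nonneg fun i _ => hterm i
      linarith
    have hzero := (Finset.sum_eq_zero_iff_of_nonneg fun i _ => hterm i).mp hsum0
    have hpzero : ∀ i, i ≠ a → p i = 0 := by
      intro i hi
      have := hzero i (Finset.mem_univ i)
      have hMa : M i a ≠ 0 := by
        have : M i a < 0 := by rw [hanti i a]; linarith [ha i hi]
        linarith
      have : p i * M i a = 0 := by linarith
      exact (mul_eq_zero.mp this).resolve_right hMa
    have hpa : p a = 1 := by
      have hsum := hp.2
      rw [Finset.sum_eq_single a] at hsum
      · exact hsum
      · intro j _ hj; exact hpzero j hj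
      · simp
    funext y
    by_cases h : y = a
    · simp [h, hpa]
    · simp [h, hpzero y h]
  · intro hpeq q hq
    subst hpeq
    unfold pay
    rw [Finset.sum_eq_single a]
    · refine Finset.sum_nonneg fun j _ => ?_
      by_cases h : j = a
      · simp [h, haa]
      · have := ha j h
        have := hq.1 j
        positivity
    · intro i _ hi
      simp [hi]
    · simp
end

section
/- Let K > 0 and define the logistic expected score E(x, y) = 1 / (1 + exp((y − x)/400)) for x, y ∈ ℝ. Let (b_t) be an arbitrary sequence of real numbers, and define sequences (a_t) and (c_t) by the Elo batch-update recursions arising from the pentathlon win counts: a_{t+1} = a_t + 6K − 5K·E(a_t, b_t) − 5K·E(a_t, c_t) and c_{t+1} = c_t + 6K − 5K·E(c_t, a_t) − 5K·E(c_t, b_t). If a_0 = c_0, then a_t = c_t for all t ≥ 0; that is, Elo assigns agents A and C identical ratings at every iteration. -/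
/-- The logistic expected-score function of the Elo rating system. -/
noncomputable def eloExpected (x y : ℝ) : ℝ :=
  1 / (1 + Real.exp ((y - x) / 400))

/-- Under the Elo batch updates arising from the pentathlon win counts,
if agents A and C start with equal ratings then their ratings coincide at
every iteration. -/
theorem elo_pentathlon_equal_ratings (K : ℝ) (hK : 0 < K)
    (a b c : ℕ → ℝ)
    (ha : ∀ t, a (t + 1) =
      a t + 6 * K - 5 * K * eloExpected (a t) (b t)
        - 5 * K * eloExpected (a t) (c t))
    (hc : ∀ t, c (t + 1) =
      c t + 6 * K - 5 * K * eloExpected (c t) (a t)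
        - 5 * K * eloExpected (c t) (b t))
    (h0 : a 0 = c 0) :
    ∀ t, a t = c t := by
  intro t
  induction t with
  | zero => exact h0
  | succ n ih =>
    rw [ha n, hc n, ih]; ring
end
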